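/- Let G be a finite group. The mark homomorphism B(G) ⊗ ℚ → ∏_Γ ℚ, sending the class of a finite G-set S to the tuple (|S^Γ|)_Γ of cardinalities of fixed-point sets, where Γ ranges over conjugacy classes of subgroups of G, is an isomorphism of ℚ-algebras. -/

import Mathlib

open Pointwise Finsupp

noncomputable section

/-- Conjugacy classes of subgroups of `G`. -/
def SubgroupConj (G : Type*) [Group G] : Type _ :=
  Quotient (MulAction.orbitRel (ConjAct G) (Subgroup G))

variable {G : Type*} [Group G]

/-- The conjugacy class of a subgroup. -/
def Subgroup.toConj (K : Subgroup G) : SubgroupConj G :=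
  Quotient.mk (MulAction.orbitRel (ConjAct G) (Subgroup G)) K

/-- A representative of a conjugacy class of subgroups. -/
def SubgroupConj.rep (c : SubgroupConj G) : Subgroup G := Quotient.out c

instance : DecidableEq (SubgroupConj G) := Classical.decEq _

instance [Finite G] : Finite (Subgroup G) :=
  Finite.of_injective (fun H => (H : Set G)) fun _ _ h => SetLike.ext' h

instance [Finite G] : Finite (SubgroupConj G) := Quotient.finite _

noncomputable instance [Finite G] : Fintype (SubgroupConj G) := Fintype.ofFinite _

instance [Finite G] (s t : Set G) : Finite (DoubleCoset.Quotient s t) :=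
  Quotient.finite _

noncomputable instance [Finite G] (s t : Set G) : Fintype (DoubleCoset.Quotient s t) :=
  Fintype.ofFinite _

/-- The conjugate subgroup `g K g⁻¹`. -/
def conjSub (g : G) (K : Subgroup G) : Subgroup G :=
  Subgroup.map (MulAut.conj g).toMonoidHom K

/-- The rational Burnside ring of `G`, as the free `ℚ`-module on the classes `[G/Γ]`. -/
abbrev BQ (G : Type*) [Group G] := SubgroupConj G →₀ ℚ

variable [Finite G]

/-- The double coset formula for the product of two basis elements
`⟨Γ⟩⟨Γ'⟩ = Σ_{g ∈ Γ'\G\Γ} ⟨Γ ∩ g⁻¹ Γ' g⟩`. -/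
def basisMul (c d : SubgroupConj G) : BQ G :=
  ∑ q : DoubleCoset.Quotient (d.rep : Set G) (c.rep : Set G),
    Finsupp.single (Subgroup.toConj (c.rep ⊓ conjSub (Quotient.out q)⁻¹ d.rep)) 1

/-- The multiplication of the Burnside ring in the basis `[G/Γ]`. -/
def mulB (x y : BQ G) : BQ G :=
  x.sum fun c a => y.sum fun d b => (a * b) • basisMul c d

/-- The unit `[G/G]` of the Burnside ring. -/
def oneB : BQ G := Finsupp.single (Subgroup.toConj (⊤ : Subgroup G)) 1

/-- Induction along an (injective) group homomorphism. -/
def indF {H : Type*} [Group H] (f : H →* G) (y : BQ H) : BQ G :=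
  y.sum fun c a => Finsupp.single (Subgroup.toConj (c.rep.map f)) a

/-- Restriction of the basis element `[G/Γ]` along `f : H →* G`:
`Res [G/Γ] = Σ_{g ∈ f(H)\G/Γ} [H / f⁻¹(g Γ g⁻¹)]`. -/
def resBasis {H : Type*} [Group H] (f : H →* G) (c : SubgroupConj G) : BQ H :=
  ∑ q : DoubleCoset.Quotient (f.range : Set G) (c.rep : Set G),
    Finsupp.single (Subgroup.toConj ((conjSub (Quotient.out q) c.rep).comap f)) 1

/-- Restriction along a group homomorphism. -/
def resF {H : Type*} [Group H] (f : H →* G) (x : BQ G) : BQ H :=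
  x.sum fun c a => a • resBasis f c

/-- The mark of the basis element `[G/Γ]` at (the class of) `Δ`: the number of
`Δ`-fixed points of `G/Γ`. -/
def markBasis (c d : SubgroupConj G) : ℚ :=
  (Nat.card {x : G ⧸ c.rep // ∀ k ∈ d.rep, k • x = x} : ℚ)

/-- The mark homomorphism, in the basis `[G/Γ]`. -/
def markMap (x : BQ G) : SubgroupConj G → ℚ :=
  fun d => x.sum fun c a => a * markBasis c d

/-- `x` is the primitive idempotent of `B(G) ⊗ ℚ` supported at the full subgroup:
its mark at `G` is `1` and its marks at all proper subgroups vanish. -/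
def IsTopIdem (x : BQ G) : Prop :=
  markMap x = fun d => if d = Subgroup.toConj (⊤ : Subgroup G) then 1 else 0

/-- `|N_G(H)/H|`. -/
def nuG (H : Subgroup G) : ℕ :=
  Nat.card (Subgroup.normalizer (H : Set G) ⧸ H.subgroupOf (Subgroup.normalizer (H : Set G)))


/-- The conjugation isomorphism `H → gHg⁻¹`, as a monoid homomorphism. -/
def conjHom (g : G) (H : Subgroup G) : ↥H →* ↥(conjSub g H) :=
  ((MulAut.conj g).toMonoidHom.comp H.subtype).codRestrict (conjSub g H)
    (fun h => Subgroup.mem_map_of_mem _ h.2)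

/-- Conjugation by an element of the normalizer of `H`, as an endomorphism of `H`. -/
def normConjHom (H : Subgroup G) (n : G) (hn : n ∈ Subgroup.normalizer (H : Set G)) : ↥H →* ↥H :=
  ((MulAut.conj n).toMonoidHom.comp H.subtype).codRestrict H
    (fun h => by simpa using (Subgroup.mem_normalizer_iff.mp hn ↑h).mp h.2)

/-!
The mark of `[G/Γ]` at `Δ` is the number of `Δ`-fixed points of `G/Γ`. Counting fixed points is
additive on disjoint unions and multiplicative on products of `G`-sets, and the decomposition of
`G/Γ × G/Γ'` into the orbits `G/(Γ ∩ g⁻¹Γ'g)`, `g ∈ Γ'\G/Γ`, is exactly the product formula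
`basisMul`, so the marks are multiplicative. A `Δ`-fixed point of `G/Γ` exists only when `Δ` is
subconjugate to `Γ`, while `Γ` itself fixes the coset `Γ`; ordering the classes by the order of
their subgroups, the table of marks is therefore triangular with nonzero diagonal. So the mark map
is injective, hence bijective between `ℚ`-spaces of the same finite dimension.
-/

section FixedCard

variable {G : Type*} [Group G]

def fixedCard (D : Subgroup G) (X : Type*) [SMul G X] : ℕ :=
  Nat.card {x : X // ∀ k ∈ D, k • x = x}

variable (D : Subgroup G)

theorem fixedCard_congr {X Y : Type*} [SMul G X] [SMul G Y] (e : X ≃ Y)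
    (he : ∀ (g : G) (x : X), e (g • x) = g • e x) : fixedCard D X = fixedCard D Y :=
  Nat.card_congr <| e.subtypeEquiv fun x => forall₂_congr fun k _ => by
    rw [← he, e.apply_eq_iff_eq]

theorem fixedCard_prod (X Y : Type*) [SMul G X] [SMul G Y] :
    fixedCard D (X × Y) = fixedCard D X * fixedCard D Y := by
  rw [fixedCard, fixedCard, fixedCard, ← Nat.card_prod]
  refine Nat.card_congr ((Equiv.subtypeEquivRight fun p => ?_).trans Equiv.subtypeProdEquivProd)
  simp only [Prod.ext_iff, Prod.smul_fst, Prod.smul_snd, forall₂_and]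

theorem fixedCard_sigma {ι : Type*} [Fintype ι] (X : ι → Type*) [∀ i, SMul G (X i)]
    [∀ i, Finite (X i)] : fixedCard D (Σ i, X i) = ∑ i, fixedCard D (X i) := by
  simp only [fixedCard]
  rw [← Nat.card_sigma]
  exact Nat.card_congr
    { toFun := fun p => ⟨p.1.1, p.1.2, fun k hk => eq_of_heq (Sigma.mk.inj (p.2 k hk)).2⟩
      invFun := fun p => ⟨⟨p.1, p.2.1⟩, fun k hk => congrArg (Sigma.mk p.1) (p.2.2 k hk)⟩
      left_inv := fun _ => rfl
      right_inv := fun _ => rfl }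

theorem fixedCard_eq_one (X : Type*) [SMul G X] [Subsingleton X] [Nonempty X] :
    fixedCard D X = 1 :=
  Nat.card_eq_one_iff_unique.mpr
    ⟨inferInstance, ⟨⟨Classical.arbitrary X, fun _ _ => Subsingleton.elim _ _⟩⟩⟩

end FixedCard

section Conjugation

variable {G : Type*} [Group G]

theorem mem_conjSub {g x : G} {K : Subgroup G} : x ∈ conjSub g K ↔ g⁻¹ * x * g ∈ K := by
  rw [conjSub, Subgroup.mem_map_equiv, MulAut.conj_symm_apply]

theorem toConj_eq_toConj_iff {K K' : Subgroup G} :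
    Subgroup.toConj K = Subgroup.toConj K' ↔ ∃ g : G, conjSub g K' = K :=
  Quotient.eq.trans ⟨fun ⟨u, hu⟩ => ⟨ConjAct.ofConjAct u, hu⟩,
    fun ⟨g, hg⟩ => ⟨ConjAct.toConjAct g, hg⟩⟩

theorem toConj_rep (c : SubgroupConj G) : Subgroup.toConj c.rep = c := Quotient.out_eq c

theorem toConj_conjSub (g : G) (K : Subgroup G) :
    Subgroup.toConj (conjSub g K) = Subgroup.toConj K :=
  toConj_eq_toConj_iff.mpr ⟨g, rfl⟩

def quotientConjSubEquiv (g : G) (K : Subgroup G) : G ⧸ K ≃ G ⧸ conjSub g K :=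
  Quotient.congr (Equiv.mulRight g⁻¹) fun a b => by
    rw [QuotientGroup.leftRel_apply, QuotientGroup.leftRel_apply, mem_conjSub]
    simp [mul_assoc]

theorem quotientConjSubEquiv_mk (g : G) (K : Subgroup G) (x : G) :
    quotientConjSubEquiv g K x = (x * g⁻¹ : G) := rfl

theorem fixedCard_quotient_conjSub (D : Subgroup G) (g : G) (K : Subgroup G) :
    fixedCard D (G ⧸ conjSub g K) = fixedCard D (G ⧸ K) := by
  refine (fixedCard_congr D (quotientConjSubEquiv g K) fun h x => ?_).symm
  induction x using QuotientGroup.induction_on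
  simp only [MulAction.Quotient.smul_coe, quotientConjSubEquiv_mk, smul_eq_mul, mul_assoc]

theorem fixedCard_quotient_rep_toConj (D K : Subgroup G) :
    fixedCard D (G ⧸ (Subgroup.toConj K).rep) = fixedCard D (G ⧸ K) := by
  obtain ⟨g, hg⟩ := toConj_eq_toConj_iff.mp (toConj_rep (Subgroup.toConj K))
  rw [← hg, fixedCard_quotient_conjSub]

end Conjugation

section DoubleCoset

variable {G : Type*} [Group G] (Γ Γ' : Subgroup G)

/-- `(q, xH_q) ↦ (xΓ, x g_q⁻¹ Γ')`, where `g_q` is the chosen representative of the double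
coset `q` and `H_q = Γ ∩ g_q⁻¹ Γ' g_q`. -/
def doubleCosetSigmaToProd :
    (Σ q : DoubleCoset.Quotient (Γ' : Set G) Γ, G ⧸ (Γ ⊓ conjSub (Quotient.out q)⁻¹ Γ')) →
      (G ⧸ Γ) × (G ⧸ Γ') :=
  fun p => Quotient.liftOn' p.2
    (fun x => ((x : G ⧸ Γ), ((x * (Quotient.out p.1)⁻¹ : G) : G ⧸ Γ'))) fun a b hab => by
      rw [QuotientGroup.leftRel_apply, Subgroup.mem_inf, mem_conjSub, inv_inv] at hab
      refine Prod.ext (QuotientGroup.eq.mpr hab.1) (QuotientGroup.eq.mpr ?_)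
      simpa [mul_assoc] using hab.2

theorem doubleCosetSigmaToProd_mk (q : DoubleCoset.Quotient (Γ' : Set G) Γ) (x : G) :
    doubleCosetSigmaToProd Γ Γ' ⟨q, x⟩ = ((x : G ⧸ Γ), ((x * (Quotient.out q)⁻¹ : G) : G ⧸ Γ')) :=
  rfl

theorem doubleCosetSigmaToProd_smul (g : G) (p : Σ q : DoubleCoset.Quotient (Γ' : Set G) Γ,
    G ⧸ (Γ ⊓ conjSub (Quotient.out q)⁻¹ Γ')) :
    doubleCosetSigmaToProd Γ Γ' (g • p) = g • doubleCosetSigmaToProd Γ Γ' p := by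
  obtain ⟨q, y⟩ := p
  induction y using QuotientGroup.induction_on
  simp only [Sigma.smul_mk, MulAction.Quotient.smul_coe, doubleCosetSigmaToProd_mk, Prod.smul_mk,
    smul_eq_mul, mul_assoc]

theorem doubleCosetSigmaToProd_injective : Function.Injective (doubleCosetSigmaToProd Γ Γ') := by
  rintro ⟨q, y⟩ ⟨q', y'⟩ h
  induction y using QuotientGroup.induction_on with | H x => ?_
  induction y' using QuotientGroup.induction_on with | H x' => ?_
  simp only [doubleCosetSigmaToProd_mk, Prod.mk.injEq, QuotientGroup.eq] at h
  obtain ⟨hΓ, hΓ'⟩ := h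
  obtain rfl : q = q' := by
    rw [← DoubleCoset.out_eq' Γ' Γ q, ← DoubleCoset.out_eq' Γ' Γ q', DoubleCoset.eq]
    exact ⟨_, inv_mem hΓ', _, hΓ, by group⟩
  congr 1
  refine QuotientGroup.eq.mpr (Subgroup.mem_inf.mpr ⟨hΓ, mem_conjSub.mpr ?_⟩)
  simpa [mul_assoc] using hΓ'

theorem doubleCosetSigmaToProd_surjective : Function.Surjective (doubleCosetSigmaToProd Γ Γ') := by
  rintro ⟨ya, yb⟩
  induction ya using QuotientGroup.induction_on with | H a => ?_
  induction yb using QuotientGroup.induction_on with | H b => ?_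
  set q := DoubleCoset.mk Γ' Γ (b⁻¹ * a)
  obtain ⟨h, hh, k, hk, hg⟩ := (DoubleCoset.eq Γ' Γ _ _).mp (DoubleCoset.out_eq' Γ' Γ q).symm
  refine ⟨⟨q, (a * k : G)⟩, ?_⟩
  rw [doubleCosetSigmaToProd_mk, hg]
  refine Prod.ext (QuotientGroup.eq.mpr ?_) (QuotientGroup.eq.mpr ?_)
  · simpa using hk
  · simpa [mul_assoc] using hh

end DoubleCoset

section Marks

variable {G : Type*} [Group G]

theorem exists_conjSub_le_of_fixedCard_ne_zero {D K : Subgroup G}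
    (h : fixedCard D (G ⧸ K) ≠ 0) : ∃ g : G, conjSub g D ≤ K := by
  obtain ⟨⟨⟨y, hy⟩⟩, -⟩ := Nat.card_ne_zero.mp h
  induction y using QuotientGroup.induction_on with | H a => ?_
  refine ⟨a⁻¹, fun z hz => ?_⟩
  rw [mem_conjSub, inv_inv] at hz
  have hfix := QuotientGroup.eq.mp (hy _ hz)
  simpa [mul_assoc] using inv_mem hfix

theorem markBasis_eq_fixedCard (c d : SubgroupConj G) :
    markBasis c d = fixedCard d.rep (G ⧸ c.rep) := rfl

theorem markBasis_toConj (K : Subgroup G) (d : SubgroupConj G) :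
    markBasis (Subgroup.toConj K) d = fixedCard d.rep (G ⧸ K) := by
  rw [markBasis_eq_fixedCard, fixedCard_quotient_rep_toConj]

def markLinearMap : BQ G →ₗ[ℚ] SubgroupConj G → ℚ :=
  Finsupp.linearCombination ℚ markBasis

theorem coe_markLinearMap : ⇑(markLinearMap : BQ G →ₗ[ℚ] _) = markMap := by
  ext x d
  simp [markLinearMap, Finsupp.linearCombination_apply, markMap, Finsupp.sum]

theorem markMap_eq_sum (x : BQ G) : markMap x = x.sum fun c a => a • markBasis c := by
  rw [← coe_markLinearMap, markLinearMap, Finsupp.linearCombination_apply]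

theorem markMap_single (c : SubgroupConj G) (a : ℚ) :
    markMap (Finsupp.single c a) = a • markBasis c := by
  rw [← coe_markLinearMap, markLinearMap, Finsupp.linearCombination_single]

theorem markMap_oneB : markMap (oneB : BQ G) = 1 := by
  have := QuotientGroup.subsingleton_quotient_top (G := G)
  ext d
  rw [oneB, markMap_single, one_smul, markBasis_toConj, fixedCard_eq_one, Nat.cast_one,
    Pi.one_apply]

variable [Finite G]

theorem fixedCard_quotient_self_ne_zero (K : Subgroup G) : fixedCard K (G ⧸ K) ≠ 0 :=
  Nat.card_ne_zero.mpr ⟨⟨⟨(1 : G), fun k hk => QuotientGroup.eq.mpr (by simpa using inv_mem hk)⟩⟩,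
    inferInstance⟩

theorem fixedCard_quotient_mul (D Γ Γ' : Subgroup G) :
    fixedCard D (G ⧸ Γ) * fixedCard D (G ⧸ Γ') =
      ∑ q : DoubleCoset.Quotient (Γ' : Set G) Γ,
        fixedCard D (G ⧸ (Γ ⊓ conjSub (Quotient.out q)⁻¹ Γ')) := by
  rw [← fixedCard_prod, ← fixedCard_sigma]
  exact (fixedCard_congr D (.ofBijective _ ⟨doubleCosetSigmaToProd_injective Γ Γ',
    doubleCosetSigmaToProd_surjective Γ Γ'⟩) (doubleCosetSigmaToProd_smul Γ Γ')).symm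

theorem markMap_basisMul (c d : SubgroupConj G) :
    markMap (basisMul c d) = markBasis c * markBasis d := by
  ext e
  rw [basisMul, ← coe_markLinearMap, map_sum, coe_markLinearMap, Finset.sum_apply, Pi.mul_apply,
    markBasis_eq_fixedCard, markBasis_eq_fixedCard]
  simp only [markMap_single, one_smul, markBasis_toConj]
  exact_mod_cast (fixedCard_quotient_mul e.rep c.rep d.rep).symm

theorem markMap_mulB (x y : BQ G) : markMap (mulB x y) = markMap x * markMap y := by
  rw [mulB, ← coe_markLinearMap, map_finsuppSum]
  simp only [map_finsuppSum, map_smul, coe_markLinearMap, markMap_basisMul]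
  rw [markMap_eq_sum x, markMap_eq_sum y, Finsupp.sum_mul]
  simp only [Finsupp.mul_sum, smul_mul_smul]

theorem markBasis_eq_zero_of_card_le {c d : SubgroupConj G} (hcd : c ≠ d)
    (hcard : Nat.card c.rep ≤ Nat.card d.rep) : markBasis c d = 0 := by
  by_contra h
  obtain ⟨g, hg⟩ := exists_conjSub_le_of_fixedCard_ne_zero (Nat.cast_ne_zero.mp h)
  refine hcd ?_
  have hcard' : Nat.card c.rep ≤ Nat.card (conjSub g d.rep) := by
    rwa [conjSub, Subgroup.card_map_of_injective (MulAut.conj g).injective]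
  rw [← toConj_rep c, ← Subgroup.eq_of_le_of_card_ge hg hcard', toConj_conjSub, toConj_rep]

theorem markMap_apply_of_forall_card_le {x : BQ G} {c : SubgroupConj G} (hc : c ∈ x.support)
    (hmax : ∀ d ∈ x.support, Nat.card d.rep ≤ Nat.card c.rep) :
    markMap x c = x c * markBasis c c := by
  rw [markMap_eq_sum, Finsupp.sum, Finset.sum_apply, Finset.sum_eq_single_of_mem c hc]
  · rfl
  · intro d hd hdc
    rw [Pi.smul_apply, markBasis_eq_zero_of_card_le hdc (hmax d hd), smul_zero]

theorem markMap_injective : Function.Injective (markMap : BQ G → SubgroupConj G → ℚ) := by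
  rw [← coe_markLinearMap, injective_iff_map_eq_zero]
  intro x hx
  by_contra hne
  obtain ⟨c, hc, hmax⟩ := x.support.exists_max_image (fun c => Nat.card c.rep)
    (Finsupp.support_nonempty_iff.mpr hne)
  have hxc := congrFun hx c
  rw [coe_markLinearMap, markMap_apply_of_forall_card_le hc hmax, markBasis_eq_fixedCard] at hxc
  exact mul_ne_zero (Finsupp.mem_support_iff.mp hc)
    (Nat.cast_ne_zero.mpr (fixedCard_quotient_self_ne_zero c.rep)) hxc

theorem markMap_bijective : Function.Bijective (markMap : BQ G → SubgroupConj G → ℚ) := by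
  refine ⟨markMap_injective, ?_⟩
  rw [← coe_markLinearMap, ← LinearMap.injective_iff_surjective_of_finrank_eq_finrank,
    coe_markLinearMap]
  · exact markMap_injective
  · rw [Module.finrank_finsupp_self, Module.finrank_fintype_fun_eq_card]

end Marks

/-- The mark homomorphism `B(G) ⊗ ℚ → ∏_Γ ℚ`, sending a class to its fixed-point
counts at (conjugacy classes of) subgroups, is an isomorphism of `ℚ`-algebras. -/
theorem markMap_is_ringIso (G : Type*) [Group G] [Finite G] :
    (∀ x y : BQ G, markMap (x + y) = markMap x + markMap y) ∧
    (∀ (q : ℚ) (x : BQ G), markMap (q • x) = q • markMap x) ∧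
    (∀ x y : BQ G, markMap (mulB x y) = markMap x * markMap y) ∧
    markMap (oneB : BQ G) = 1 ∧
    Function.Bijective (markMap : BQ G → SubgroupConj G → ℚ) := by
  refine ⟨fun x y => ?_, fun q x => ?_, markMap_mulB, markMap_oneB, markMap_bijective⟩
  · simp only [← coe_markLinearMap, map_add]
  · simp only [← coe_markLinearMap, map_smul]

end
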